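/- In the free associative algebra over a field of characteristic zero, with left-normed commutators [a,b] = ab - ba, the following identity holds: [x_1,x_3][x_2,x_4] + [x_1,x_2][x_3,x_4] = [x_1x_2, x_3, x_4] - [x_1,x_3,x_4]x_2 + [x_1x_3, x_2, x_4] - [x_1,x_2,x_4]x_3, where [a,b,c] denotes [[a,b],c]. -/
import Mathlib

theorem stmt_10 (k : Type) [Field k] [CharZero k] :
    ∀ x : Fin 4 → FreeAlgebra k (Fin 4), x = (fun i => FreeAlgebra.ι k i) →
    ∀ br : FreeAlgebra k (Fin 4) → FreeAlgebra k (Fin 4) → FreeAlgebra k (Fin 4),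
      br = (fun a b => a * b - b * a) →
    br (x 0) (x 2) * br (x 1) (x 3) + br (x 0) (x 1) * br (x 2) (x 3)
      = br (br (x 0 * x 1) (x 2)) (x 3) - br (br (x 0) (x 2)) (x 3) * x 1
        + br (br (x 0 * x 2) (x 1)) (x 3) - br (br (x 0) (x 1)) (x 3) * x 2 := by
  intro x hx br hbr
  subst hbr
  noncomm_ring
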